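/- arXiv:math/0307274 — 4 statements merged into one kernel-verified Lean document; each statement's English description precedes it below -/
import Mathlib

section
/- Let 0 < α < 1, 1 < p < ∞, 0 < q ≤ 1 with α = 1/q − 1/p, and let b ∈ Λ_α(T). Let a be an H^q(T)-atom supported in an interval I centered at x_I with radius r < π/4, and let Ĩ be the interval centered at x_I of radius 2r. Then the local part A_1(x) = 1_{Ĩ}(x) · p.v. ∫_T (b(x+t) − b(2x)) a(t) / tan((x−t)/2) dt satisfies ‖A_1‖_{L^p(T)} ≤ C ‖b‖_{Λ_α}, with C independent of the atom a. -/
/-!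
For `x ∈ Ĩ` and `t ∈ I` we have `|x - t| ≤ 3r < π`, so `|tan ((x - t)/2)| ≥ |x - t|/2`, while the
Hölder condition gives `|b (x + t) - b (2x)| ≤ M |t - x|^α`. Hence, uniformly on `Ĩ`,
`|A₁ x| ≤ 2 M |I|^{-1/q} ∫_I |t - x|^{α-1} dt ≲ M r^{α - 1/q}`, and integrating the `p`-th power
over `Ĩ` gives `‖A₁‖_p ≲ M r^{α - 1/q + 1/p} = M`: the exponent vanishes because `α = 1/q - 1/p`.
-/

open MeasureTheory Real

/-- An `H^q(𝕋)`-atom supported in the interval of center `x_I` and radius `r`: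
bounded by `|I|^{-1/q}` and with vanishing moments up to order `[1/q] - 1`. -/
def IsHqAtom (q x_I r : ℝ) (a : ℝ → ℝ) : Prop :=
  Measurable a ∧ (∀ t, a t ≠ 0 → |t - x_I| ≤ r) ∧
  (∀ t, |a t| ≤ (2 * r) ^ (-(1 / q))) ∧
  (∀ k : ℕ, (k : ℝ) ≤ 1 / q - 1 → ∫ t in (x_I - r)..(x_I + r), a t * t ^ k = 0)

open intervalIntegral Set

theorem abs_le_abs_tan {u : ℝ} (hu : |u| < π / 2) : |u| ≤ |tan u| := by
  rcases le_or_gt 0 u with h | h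
  · rw [abs_of_nonneg h] at hu ⊢
    exact (le_tan h hu).trans (le_abs_self _)
  · rw [abs_of_neg h] at hu ⊢
    simpa [tan_neg] using (le_tan (neg_nonneg.2 h.le) hu).trans (le_abs_self _)

theorem intervalIntegrable_abs_rpow {s : ℝ} (hs : -1 < s) (a b : ℝ) :
    IntervalIntegrable (fun u => |u| ^ s) volume a b := by
  have h₀ : ∀ c, 0 ≤ c → IntervalIntegrable (fun u => |u| ^ s) volume 0 c := fun c hc =>
    (intervalIntegrable_rpow' hs).congr_ae <| by
      filter_upwards [ae_restrict_mem measurableSet_uIoc] with u hu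
      rw [uIoc_of_le hc] at hu
      rw [abs_of_pos hu.1]
  have h : ∀ c, IntervalIntegrable (fun u => |u| ^ s) volume 0 c := by
    intro c
    rcases le_total 0 c with hc | hc
    · exact h₀ c hc
    · simpa using (IntervalIntegrable.iff_comp_neg).1 (h₀ (-c) (neg_nonneg.2 hc))
  exact (h a).symm.trans (h b)

theorem intervalIntegrable_abs_sub_rpow {s : ℝ} (hs : -1 < s) (x a b : ℝ) :
    IntervalIntegrable (fun t => |t - x| ^ s) volume a b := by
  simpa using (intervalIntegrable_abs_rpow hs (a - x) (b - x)).comp_sub_right x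

theorem integral_abs_rpow {s : ℝ} (hs : -1 < s) {c : ℝ} (hc : 0 ≤ c) :
    ∫ u in -c..c, |u| ^ s = 2 * c ^ (s + 1) / (s + 1) := by
  have hpos : ∫ u in (0 : ℝ)..c, |u| ^ s = c ^ (s + 1) / (s + 1) := by
    rw [integral_congr (g := fun u => u ^ s) fun u hu => by
      rw [uIcc_of_le hc] at hu; rw [abs_of_nonneg hu.1]]
    rw [integral_rpow (Or.inl hs), zero_rpow (by linarith), sub_zero]
  have hneg : ∫ u in -c..0, |u| ^ s = c ^ (s + 1) / (s + 1) := by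
    simpa [hpos] using (integral_comp_neg (a := 0) (b := c) (fun u => |u| ^ s)).symm
  rw [← integral_add_adjacent_intervals (intervalIntegrable_abs_rpow hs _ _)
    (intervalIntegrable_abs_rpow hs _ _), hneg, hpos]
  ring

theorem integral_abs_sub_rpow_le {s a b x R : ℝ} (hs : -1 < s) (hab : a ≤ b)
    (ha : x - R ≤ a) (hb : b ≤ x + R) :
    ∫ t in a..b, |t - x| ^ s ≤ 2 * R ^ (s + 1) / (s + 1) := by
  rw [integral_comp_sub_right (fun u => |u| ^ s)]
  calc ∫ u in a - x..b - x, |u| ^ s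
      ≤ ∫ u in -R..R, |u| ^ s :=
        integral_mono_interval (by linarith) (by linarith) (by linarith)
          (.of_forall fun u => by positivity) (intervalIntegrable_abs_rpow hs _ _)
    _ = 2 * R ^ (s + 1) / (s + 1) := integral_abs_rpow hs (by linarith)

theorem abs_div_tan_half_sub_le {g x t M s : ℝ} (hM : 0 ≤ M) (hg : |g| ≤ M * |t - x| ^ s)
    (hxt : |x - t| < π) :
    |g / tan ((x - t) / 2)| ≤ 2 * M * |t - x| ^ (s - 1) := by
  rcases eq_or_ne t x with rfl | hne
  · simp only [sub_self, zero_div, tan_zero, div_zero, abs_zero]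
    positivity
  have hd : 0 < |t - x| := abs_pos.2 (sub_ne_zero.2 hne)
  rw [abs_sub_comm] at hxt
  have htan : |t - x| / 2 ≤ |tan ((x - t) / 2)| := by
    have := abs_le_abs_tan (u := (x - t) / 2) (by rw [abs_div, abs_two, abs_sub_comm]; linarith)
    rwa [abs_div, abs_two, abs_sub_comm] at this
  calc |g / tan ((x - t) / 2)| = |g| / |tan ((x - t) / 2)| := abs_div _ _
    _ ≤ M * |t - x| ^ s / (|t - x| / 2) := div_le_div₀ (by positivity) hg (by positivity) htan
    _ = 2 * M * |t - x| ^ (s - 1) := by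
        rw [rpow_sub hd, rpow_one]
        field_simp

theorem abs_intervalIntegral_le_of_abs_le_indicator {f g : ℝ → ℝ} {a b a' b' : ℝ}
    (hab : a ≤ b) (ha'b' : a' ≤ b') (hg : IntervalIntegrable g volume a' b')
    (hf : ∀ t, |f t| ≤ (Icc a' b').indicator g t) :
    |∫ t in a..b, f t| ≤ ∫ t in a'..b', g t := by
  have hG : Integrable ((Icc a' b').indicator g) :=
    ((intervalIntegrable_iff_integrableOn_Icc_of_le ha'b').1 hg).integrable_indicator
      measurableSet_Icc
  have hG0 : 0 ≤ (Icc a' b').indicator g := fun t => (abs_nonneg _).trans (hf t)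
  calc |∫ t in a..b, f t|
      ≤ |∫ t in a..b, (Icc a' b').indicator g t| :=
        (norm_integral_le_of_norm_le (f := f) hab (.of_forall fun t _ => hf t)
          hG.intervalIntegrable).trans (le_abs_self _)
    _ = ∫ t in Ioc a b, (Icc a' b').indicator g t := by
        rw [integral_of_le hab,
          abs_of_nonneg (setIntegral_nonneg measurableSet_Ioc fun t _ => hG0 t)]
    _ ≤ ∫ t, (Icc a' b').indicator g t := setIntegral_le_integral hG (.of_forall hG0)
    _ = ∫ t in a'..b', g t := by
        rw [MeasureTheory.integral_indicator measurableSet_Icc, integral_Icc_eq_integral_Ioc,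
          integral_of_le ha'b']

theorem rpow_one_div_integral_abs_rpow_le {F : ℝ → ℝ} {a b p B : ℝ} (hab : a ≤ b) (hp : 0 < p)
    (hB : 0 ≤ B) (hF : ∀ x ∈ Icc a b, |F x| ≤ B) :
    (∫ x in a..b, |F x| ^ p) ^ (1 / p) ≤ B * (b - a) ^ (1 / p) := by
  have hint : ∫ x in a..b, |F x| ^ p ≤ B ^ p * (b - a) := by
    rw [← abs_of_nonneg (sub_nonneg.2 hab)]
    refine (le_abs_self _).trans <| intervalIntegral.norm_integral_le_of_norm_le_const
      (f := fun x => |F x| ^ p) (C := B ^ p) fun x hx => ?_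
    rw [uIoc_of_le hab] at hx
    rw [norm_eq_abs, abs_of_nonneg (by positivity)]
    exact rpow_le_rpow (abs_nonneg _) (hF x (Ioc_subset_Icc_self hx)) hp.le
  calc (∫ x in a..b, |F x| ^ p) ^ (1 / p)
      ≤ (B ^ p * (b - a)) ^ (1 / p) :=
        rpow_le_rpow (integral_nonneg hab fun x _ => by positivity) hint (by positivity)
    _ = B * (b - a) ^ (1 / p) := by
        rw [mul_rpow (by positivity) (by linarith), ← rpow_mul hB, mul_one_div_cancel hp.ne',
          rpow_one]

theorem abs_integral_local_part_le {b a : ℝ → ℝ} {α M A c r x : ℝ} (hα : 0 < α) (hM : 0 ≤ M)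
    (hr : 0 < r) (hrπ : 3 * r < π) (hb : ∀ x y, |b x - b y| ≤ M * |x - y| ^ α)
    (ha_supp : ∀ t, a t ≠ 0 → |t - c| ≤ r) (ha_bdd : ∀ t, |a t| ≤ A) (hx : |x - c| ≤ 2 * r) :
    |∫ t in (c - π)..(c + π), (b (x + t) - b (2 * x)) * a t / tan ((x - t) / 2)| ≤
      2 * M * A * (2 * (3 * r) ^ α / α) := by
  have hxc := abs_le.1 hx
  have hkernel : ∀ t, |(b (x + t) - b (2 * x)) * a t / tan ((x - t) / 2)| ≤
      (Icc (c - r) (c + r)).indicator (fun t => 2 * M * A * |t - x| ^ (α - 1)) t := by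
    intro t
    by_cases ht : t ∈ Icc (c - r) (c + r)
    · have hxt : |x - t| < π := by
        rw [abs_lt]; constructor <;> linarith [ht.1, ht.2]
      have hnum : |b (x + t) - b (2 * x)| ≤ M * |t - x| ^ α := by
        simpa [show x + t - 2 * x = t - x by ring] using hb (x + t) (2 * x)
      rw [indicator_of_mem ht, mul_div_right_comm, abs_mul]
      calc _ ≤ 2 * M * |t - x| ^ (α - 1) * A :=
            mul_le_mul (abs_div_tan_half_sub_le hM hnum hxt) (ha_bdd t) (abs_nonneg _)
              (by positivity)
        _ = _ := by ring
    · have hat : a t = 0 := by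
        by_contra hat
        have := abs_le.1 (ha_supp t hat)
        exact ht ⟨by linarith, by linarith⟩
      simp [hat, indicator_of_notMem ht]
  have hA : 0 ≤ A := (abs_nonneg _).trans (ha_bdd 0)
  calc _ ≤ ∫ t in (c - r)..(c + r), 2 * M * A * |t - x| ^ (α - 1) :=
        abs_intervalIntegral_le_of_abs_le_indicator (by linarith) (by linarith)
          ((intervalIntegrable_abs_sub_rpow (by linarith) x _ _).const_mul _) hkernel
    _ = 2 * M * A * ∫ t in (c - r)..(c + r), |t - x| ^ (α - 1) := integral_const_mul _ _
    _ ≤ 2 * M * A * (2 * (3 * r) ^ α / α) := by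
        gcongr
        simpa only [sub_add_cancel] using
          integral_abs_sub_rpow_le (a := c - r) (b := c + r) (x := x) (R := 3 * r)
            (by linarith : -1 < α - 1) (by linarith) (by linarith) (by linarith)

theorem local_part_estimate_general (p q α : ℝ) (hα0 : 0 < α) (hp : 1 < p)
    (hα : α = 1 / q - 1 / p) :
    ∃ C > 0, ∀ (b a : ℝ → ℝ) (M x_I r : ℝ), 0 ≤ M → 0 < r → r < π / 4 →
      Function.Periodic b (2 * π) →
      (∀ x y : ℝ, |b x - b y| ≤ M * |x - y| ^ α) →
      IsHqAtom q x_I r a →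
      (∫ x in (x_I - 2 * r)..(x_I + 2 * r),
          |∫ t in (x_I - π)..(x_I + π),
            (b (x + t) - b (2 * x)) * a t / Real.tan ((x - t) / 2)| ^ p) ^ (1 / p) ≤
        C * M := by
  refine ⟨4 * 2 ^ (-(1 / q)) * 3 ^ α * 4 ^ (1 / p) / α, by positivity, ?_⟩
  rintro b a M x_I r hM hr hrπ - hb ⟨-, ha_supp, ha_bdd, -⟩
  have hlocal : ∀ x ∈ Icc (x_I - 2 * r) (x_I + 2 * r),
      |∫ t in (x_I - π)..(x_I + π), (b (x + t) - b (2 * x)) * a t / tan ((x - t) / 2)| ≤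
        2 * M * (2 * r) ^ (-(1 / q)) * (2 * (3 * r) ^ α / α) := fun x hx =>
    abs_integral_local_part_le hα0 hM hr (by linarith) hb ha_supp ha_bdd
      (abs_le.2 ⟨by linarith [hx.1], by linarith [hx.2]⟩)
  have hscale : (2 * r) ^ (-(1 / q)) * (3 * r) ^ α * (4 * r) ^ (1 / p) =
      2 ^ (-(1 / q)) * 3 ^ α * 4 ^ (1 / p) := by
    rw [mul_rpow (by norm_num) hr.le, mul_rpow (by norm_num) hr.le, mul_rpow (by norm_num) hr.le]
    calc _ = 2 ^ (-(1 / q)) * 3 ^ α * 4 ^ (1 / p) * r ^ (-(1 / q) + α + 1 / p) := by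
          rw [rpow_add hr, rpow_add hr]; ring
      _ = _ := by rw [hα, show -(1 / q) + (1 / q - 1 / p) + 1 / p = 0 by ring, rpow_zero, mul_one]
  calc _ ≤ 2 * M * (2 * r) ^ (-(1 / q)) * (2 * (3 * r) ^ α / α) *
        (x_I + 2 * r - (x_I - 2 * r)) ^ (1 / p) :=
        rpow_one_div_integral_abs_rpow_le (by linarith) (by linarith) (by positivity) hlocal
    _ = _ := by
        rw [show x_I + 2 * r - (x_I - 2 * r) = 4 * r by ring]
        linear_combination (4 * M / α) * hscale

/-- **Local part estimate.** For `0 < α < 1`, `1 < p < ∞`, `0 < q ≤ 1`, `α = 1/q - 1/p`,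
`b ∈ Λ_α(𝕋)` with seminorm `M`, and `a` an `H^q`-atom on the interval `I` of center `x_I` and
radius `r < π/4`, the local part `A_1 = 1_{Ĩ} · ∫ (b(x+t)-b(2x)) a(t)/tan((x-t)/2) dt`
satisfies `‖A_1‖_{L^p} ≤ C M`, with `C` independent of the atom. -/
theorem local_part_estimate (p q α : ℝ) (hα0 : 0 < α) (hα1 : α < 1) (hp : 1 < p)
    (hq0 : 0 < q) (hq1 : q ≤ 1) (hα : α = 1 / q - 1 / p) :
    ∃ C > 0, ∀ (b a : ℝ → ℝ) (M x_I r : ℝ), 0 ≤ M → 0 < r → r < π / 4 →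
      Function.Periodic b (2 * π) →
      (∀ x y : ℝ, |b x - b y| ≤ M * |x - y| ^ α) →
      IsHqAtom q x_I r a →
      (∫ x in (x_I - 2 * r)..(x_I + 2 * r),
          |∫ t in (x_I - π)..(x_I + π),
            (b (x + t) - b (2 * x)) * a t / Real.tan ((x - t) / 2)| ^ p) ^ (1 / p) ≤
        C * M :=
  local_part_estimate_general p q α hα0 hp hα
end

section
/- Let 0 < α < 1, 0 < q ≤ 1, 1 < p < ∞ with α = 1/q − 1/p, and b ∈ Λ_α(T). Let a be an H^q-atom supported in interval I centered at x_I of radius r < π/4. Then for x outside Ĩ (the interval of radius 2r around x_I), the term A_2^{(1)}(x) = ∫_T (b(x+t) − b(x+x_I)) a(t)/tan((x−t)/2) dt satisfies |A_2^{(1)}(x)| ≤ C ‖b‖_{Λ_α} |I|^{α+1−1/q} / |x−x_I|, and consequently ‖A_2^{(1)}‖_{L^p} ≤ C ‖b‖_{Λ_α}. -/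
/-!
For `t ∈ I` and `x ∉ Ĩ` the Hölder bound gives `|b(x+t) - b(x+x_I)| ≤ M |I|^α` and
`|tan((x-t)/2)| ≥ |x - x_I| / 4`, while `|a| ≤ |I|^{-1/q}` vanishes off `I`; integrating over `I`
gives `|A_2^{(1)}(x)| ≤ 4 M |I|^{α+1-1/q} / |x - x_I|`. The `p`-th power of this bound is dominated
by `max(|I|, |x - x_I|)^{-p}`, whose integral is `O(|I|^{1-p})`, and `α = 1/q - 1/p` makes the
powers of `|I|` cancel in the `L^p` norm.
-/

open MeasureTheory Real

/-- `A_2^{(1)}(x)`, for the interval `I` centered at `x_I`. -/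
noncomputable def A21 (b a : ℝ → ℝ) (x_I x : ℝ) : ℝ :=
  ∫ t in (x_I - π)..(x_I + π), (b (x + t) - b (x + x_I)) * a t / Real.tan ((x - t) / 2)

theorem inv_abs_tan_le {u c : ℝ} (hc : 0 < c) (hcu : c ≤ |u|) (hcπ : c ≤ π - |u|) :
    |tan u|⁻¹ ≤ c⁻¹ := by
  have key : ∀ w, c ≤ w → w < π / 2 → c ≤ |tan w| := fun w hcw hw =>
    (hcw.trans (le_tan (hc.le.trans hcw) hw)).trans (le_abs_self _)
  have htan : |tan u| = |tan (|u|)| := by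
    rcases abs_cases u with ⟨h, -⟩ | ⟨h, -⟩ <;> simp [h, tan_neg]
  rcases lt_trichotomy |u| (π / 2) with h | h | h
  · exact inv_anti₀ hc (htan ▸ key _ hcu h)
  · -- Mathlib's `tan (π / 2)` is `0`, so the left side is `0⁻¹ = 0`.
    rw [htan, h, tan_pi_div_two, abs_zero, inv_zero]
    positivity
  · have := key (π - |u|) hcπ (by linarith)
    rw [tan_pi_sub, abs_neg, ← htan] at this
    exact inv_anti₀ hc this

theorem abs_intervalIntegral_le_of_support_subset {f : ℝ → ℝ} {c r R B : ℝ} (hr : 0 ≤ r)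
    (hrR : r < R) (hf : ∀ t, f t ≠ 0 → |t - c| ≤ r) (hB : ∀ t, |t - c| ≤ r → |f t| ≤ B) :
    |∫ t in (c - R)..(c + R), f t| ≤ B * (2 * r) := by
  have hsub : Set.Icc (c - r) (c + r) ⊆ Set.Ioc (c - R) (c + R) :=
    Set.Icc_subset_Ioc (by linarith) (by linarith)
  rw [intervalIntegral.integral_of_le (by linarith),
    setIntegral_eq_of_subset_of_forall_sdiff_eq_zero measurableSet_Ioc hsub fun t ht => ?_]
  · have := norm_setIntegral_le_of_norm_le_const (s := Set.Icc (c - r) (c + r)) (μ := volume)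
      (f := f) measure_Icc_lt_top fun t ht => by
        rw [Real.norm_eq_abs]
        exact hB t (abs_le.2 ⟨by linarith [ht.1], by linarith [ht.2]⟩)
    rwa [volume_real_Icc_of_le (by linarith), show c + r - (c - r) = 2 * r by ring] at this
  · by_contra hne
    have := abs_le.1 (hf t hne)
    exact ht.2 ⟨by linarith, by linarith⟩

theorem abs_A21_le {b a : ℝ → ℝ} {M α A x_I r x : ℝ} (hα : 0 ≤ α)
    (hb : ∀ x y : ℝ, |b x - b y| ≤ M * |x - y| ^ α) (hsupp : ∀ t, a t ≠ 0 → |t - x_I| ≤ r)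
    (hsize : ∀ t, |a t| ≤ A) (hr : 0 < r) (hx : 2 * r ≤ |x - x_I|) (hxπ : |x - x_I| ≤ π) :
    |A21 b a x_I x| ≤ M * (2 * r) ^ α * A * (4 / |x - x_I|) * (2 * r) := by
  refine abs_intervalIntegral_le_of_support_subset hr.le (by linarith)
    (fun t ht => hsupp t fun h => ht (by simp [h])) fun t ht => ?_
  have hxt : |x - x_I| - r ≤ |x - t| ∧ |x - t| ≤ |x - x_I| + r := by
    have h₁ := abs_sub_abs_le_abs_sub (x - x_I) (x - t)
    have h₂ := abs_sub_abs_le_abs_sub (x - t) (x - x_I)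
    rw [show x - x_I - (x - t) = t - x_I by ring] at h₁
    rw [show x - t - (x - x_I) = -(t - x_I) by ring, abs_neg] at h₂
    constructor <;> linarith
  have hkernel : |tan ((x - t) / 2)|⁻¹ ≤ 4 / |x - x_I| := by
    have := inv_abs_tan_le (u := (x - t) / 2) (c := |x - x_I| / 4) (by linarith)
      (by rw [abs_div, abs_two]; linarith) (by rw [abs_div, abs_two]; linarith)
    rwa [inv_div] at this
  have hholder : |b (x + t) - b (x + x_I)| ≤ M * (2 * r) ^ α := by
    refine (hb _ _).trans ?_
    have hM : 0 ≤ M := by simpa using (abs_nonneg _).trans (hb 1 0)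
    rw [show x + t - (x + x_I) = t - x_I by ring]
    gcongr
    linarith
  have hA : 0 ≤ A := (abs_nonneg _).trans (hsize t)
  have hMr : 0 ≤ M * (2 * r) ^ α := (abs_nonneg _).trans hholder
  rw [abs_div, abs_mul, div_eq_mul_inv]
  exact mul_le_mul (mul_le_mul hholder (hsize t) (abs_nonneg _) hMr) hkernel (by positivity)
    (mul_nonneg hMr hA)

theorem integral_max_rpow_neg_le {ρ R p : ℝ} (hρ : 0 < ρ) (hρR : ρ ≤ R) (hp : 1 < p) :
    ∫ u in (-R)..R, max ρ |u| ^ (-p) ≤ 2 * p / (p - 1) * ρ ^ (1 - p) := by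
  set m : ℝ → ℝ := fun u => max ρ |u| ^ (-p)
  have hm : Continuous m := (continuous_const.max continuous_abs).rpow_const
    fun u => Or.inl (hρ.trans_le (le_max_left _ _)).ne'
  have hmi : ∀ a b, IntervalIntegrable m volume a b := fun a b => hm.intervalIntegrable a b
  have hcore : ∫ u in (-ρ)..ρ, m u = 2 * ρ ^ (1 - p) := by
    rw [intervalIntegral.integral_congr (g := fun _ => ρ ^ (-p)) fun u hu => ?_]
    · rw [intervalIntegral.integral_const, smul_eq_mul, show 1 - p = 1 + -p by ring, rpow_add hρ,
        rpow_one]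
      ring
    · rw [Set.uIcc_of_le (by linarith)] at hu
      simp only [m, max_eq_left (abs_le.2 hu)]
  have htail : ∫ u in ρ..R, m u ≤ ρ ^ (1 - p) / (p - 1) := by
    rw [intervalIntegral.integral_congr (g := fun u => u ^ (-p)) fun u hu => ?_]
    · rw [integral_rpow (Or.inr ⟨by linarith, by simp [Set.uIcc_of_le hρR]; intro; linarith⟩)]
      rw [show -p + 1 = -(p - 1) by ring, show 1 - p = -(p - 1) by ring, div_neg, ← neg_div,
        neg_sub]
      gcongr
      linarith [rpow_nonneg (hρ.le.trans hρR) (-(p - 1))]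
    · rw [Set.uIcc_of_le hρR] at hu
      simp only [m, abs_of_pos (hρ.trans_le hu.1), max_eq_right hu.1]
  have hleft : ∫ u in (-R)..(-ρ), m u = ∫ u in ρ..R, m u := by
    rw [← intervalIntegral.integral_comp_neg]
    simp only [m, abs_neg]
  rw [← intervalIntegral.integral_add_adjacent_intervals (hmi _ (-ρ)) (hmi _ _),
    ← intervalIntegral.integral_add_adjacent_intervals (hmi (-ρ) ρ) (hmi _ R), hleft, hcore]
  have : 2 * p / (p - 1) * ρ ^ (1 - p) = 2 * ρ ^ (1 - p) + 2 * (ρ ^ (1 - p) / (p - 1)) := by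
    field_simp [show p - 1 ≠ 0 by linarith]
    ring
  linarith

theorem rpow_integral_rpow_le_of_le_div_max {F : ℝ → ℝ} {c R ρ K p : ℝ} (hρ : 0 < ρ)
    (hρR : ρ ≤ R) (hp : 1 < p) (hK : 0 ≤ K) (hF0 : ∀ x, 0 ≤ F x)
    (hF : ∀ x, |x - c| ≤ R → F x ≤ K / max ρ |x - c|) :
    (∫ x in (c - R)..(c + R), F x ^ p) ^ (1 / p) ≤
      K * (2 * p / (p - 1)) ^ (1 / p) * ρ ^ ((1 - p) / p) := by
  have hp0 : 0 < p := by linarith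
  have hmax : ∀ x, 0 < max ρ |x - c| := fun x => hρ.trans_le (le_max_left _ _)
  have hmajorant : ∀ x ∈ Set.Ioc (c - R) (c + R), ‖F x ^ p‖ ≤ K ^ p * max ρ |x - c| ^ (-p) :=
    fun x hx => by
      rw [norm_of_nonneg (rpow_nonneg (hF0 x) p), rpow_neg (hmax x).le, ← div_eq_mul_inv,
        ← div_rpow hK (hmax x).le]
      exact rpow_le_rpow (hF0 x) (hF x (abs_le.2 ⟨by linarith [hx.1], by linarith [hx.2]⟩))
        hp0.le
  have hcont : Continuous fun x => K ^ p * max ρ |x - c| ^ (-p) :=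
    continuous_const.mul <| (continuous_const.max (continuous_id.sub continuous_const).abs).rpow_const
      fun x => Or.inl (hmax x).ne'
  have hint : ∫ x in (c - R)..(c + R), F x ^ p ≤ K ^ p * (2 * p / (p - 1) * ρ ^ (1 - p)) :=
    calc ∫ x in (c - R)..(c + R), F x ^ p
        ≤ ∫ x in (c - R)..(c + R), K ^ p * max ρ |x - c| ^ (-p) :=
          (le_abs_self _).trans (intervalIntegral.norm_integral_le_of_norm_le (by linarith)
            (ae_of_all _ hmajorant) (hcont.intervalIntegrable _ _))
      _ = K ^ p * ∫ u in (-R)..R, max ρ |u| ^ (-p) := by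
          rw [intervalIntegral.integral_const_mul,
            intervalIntegral.integral_comp_sub_right (fun u => max ρ |u| ^ (-p))]
          ring_nf
      _ ≤ K ^ p * (2 * p / (p - 1) * ρ ^ (1 - p)) := by
          gcongr
          exact integral_max_rpow_neg_le hρ hρR hp
  have hfactor : 0 ≤ 2 * p / (p - 1) := div_nonneg (by linarith) (by linarith)
  calc (∫ x in (c - R)..(c + R), F x ^ p) ^ (1 / p)
      ≤ (K ^ p * (2 * p / (p - 1) * ρ ^ (1 - p))) ^ (1 / p) :=
        rpow_le_rpow (intervalIntegral.integral_nonneg (by linarith)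
          fun x _ => rpow_nonneg (hF0 x) p) hint (by positivity)
    _ = K * (2 * p / (p - 1)) ^ (1 / p) * ρ ^ ((1 - p) / p) := by
        rw [mul_rpow (by positivity) (by positivity), mul_rpow hfactor (by positivity),
          ← rpow_mul hK, ← rpow_mul hρ.le, mul_one_div_cancel hp0.ne', rpow_one, mul_one_div,
          mul_assoc]

theorem A21_estimate_general (p q α : ℝ) (hα0 : 0 < α) (hp : 1 < p) (hα : α = 1 / q - 1 / p) :
    ∃ C > 0, ∀ (b a : ℝ → ℝ) (M x_I r : ℝ), 0 ≤ M → 0 < r → r < π / 4 →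
      Function.Periodic b (2 * π) →
      (∀ x y : ℝ, |b x - b y| ≤ M * |x - y| ^ α) →
      IsHqAtom q x_I r a →
      (∀ x : ℝ, 2 * r ≤ |x - x_I| → |x - x_I| ≤ π →
        |∫ t in (x_I - π)..(x_I + π),
            (b (x + t) - b (x + x_I)) * a t / Real.tan ((x - t) / 2)| ≤
          C * M * (2 * r) ^ (α + 1 - 1 / q) / |x - x_I|) ∧
      (∫ x in (x_I - π)..(x_I + π),
          (if 2 * r ≤ |x - x_I| then
            |∫ t in (x_I - π)..(x_I + π),
              (b (x + t) - b (x + x_I)) * a t / Real.tan ((x - t) / 2)|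
          else 0) ^ p) ^ (1 / p) ≤ C * M := by
  have hfactor : 1 ≤ (2 * p / (p - 1)) ^ (1 / p) :=
    one_le_rpow (by rw [le_div_iff₀ (by linarith)]; linarith) (by positivity)
  refine ⟨4 * (2 * p / (p - 1)) ^ (1 / p), by positivity,
    fun b a M x_I r hM hr hrπ _ hb ha => ?_⟩
  obtain ⟨-, hsupp, hsize, -⟩ := ha
  have h2r : 0 < 2 * r := by positivity
  have hpoint : ∀ x, 2 * r ≤ |x - x_I| → |x - x_I| ≤ π →
      |A21 b a x_I x| ≤ 4 * M * (2 * r) ^ (α + 1 - 1 / q) / |x - x_I| :=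
    fun x hx hxπ => (abs_A21_le hα0.le hb hsupp hsize hr hx hxπ).trans_eq <| by
      rw [show α + 1 - 1 / q = α + -(1 / q) + 1 by ring, rpow_add h2r, rpow_add h2r, rpow_one]
      ring
  have hcancel : (2 * r) ^ (α + 1 - 1 / q) * (2 * r) ^ ((1 - p) / p) = 1 := by
    rw [← rpow_add h2r, hα, show 1 / q - 1 / p + 1 - 1 / q + (1 - p) / p = 0 by field_simp; ring,
      rpow_zero]
  refine ⟨fun x hx hxπ => (hpoint x hx hxπ).trans ?_, ?_⟩
  · gcongr
    linarith
  · refine (rpow_integral_rpow_le_of_le_div_max (K := 4 * M * (2 * r) ^ (α + 1 - 1 / q)) h2r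
      (by linarith [pi_pos]) hp (by positivity) (fun x => by split_ifs <;> positivity)
      fun x hx => ?_).trans_eq ?_
    · split_ifs with h
      · exact (hpoint x h hx).trans_eq (by rw [max_eq_right h])
      · positivity
    · linear_combination 4 * M * (2 * p / (p - 1)) ^ (1 / p) * hcancel

/-- **Estimate of `A_2^{(1)}`.** For `0 < α < 1`, `0 < q ≤ 1`, `1 < p < ∞`, `α = 1/q - 1/p`,
`b ∈ Λ_α` with seminorm `M` and `a` an `H^q`-atom on the interval `I` of center `x_I` and radius
`r < π/4`: for `x` outside `Ĩ`, `|A_2^{(1)}(x)| ≤ C M |I|^{α+1-1/q} / |x - x_I|`, and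
consequently `‖A_2^{(1)}‖_{L^p} ≤ C M`. -/
theorem A21_estimate (p q α : ℝ) (hα0 : 0 < α) (hα1 : α < 1) (hq0 : 0 < q) (hq1 : q ≤ 1)
    (hp : 1 < p) (hα : α = 1 / q - 1 / p) :
    ∃ C > 0, ∀ (b a : ℝ → ℝ) (M x_I r : ℝ), 0 ≤ M → 0 < r → r < π / 4 →
      Function.Periodic b (2 * π) →
      (∀ x y : ℝ, |b x - b y| ≤ M * |x - y| ^ α) →
      IsHqAtom q x_I r a →
      (∀ x : ℝ, 2 * r ≤ |x - x_I| → |x - x_I| ≤ π →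
        |∫ t in (x_I - π)..(x_I + π),
            (b (x + t) - b (x + x_I)) * a t / Real.tan ((x - t) / 2)| ≤
          C * M * (2 * r) ^ (α + 1 - 1 / q) / |x - x_I|) ∧
      (∫ x in (x_I - π)..(x_I + π),
          (if 2 * r ≤ |x - x_I| then
            |∫ t in (x_I - π)..(x_I + π),
              (b (x + t) - b (x + x_I)) * a t / Real.tan ((x - t) / 2)|
          else 0) ^ p) ^ (1 / p) ≤ C * M :=
  A21_estimate_general p q α hα0 hp hα
end

section
/- Let q ≤ 1 and m = [1/q] − 1. Let a be an H^q-atom supported in an interval I centered at x_I of radius r < π/4 (so a has vanishing moments up to order m). Then for x outside Ĩ, |∫_T a(t)/tan((x−t)/2) dt| ≤ C |I|^{m+1−1/q + 1} / |x−x_I|^{m+2}, where the estimate comes from subtracting the degree-m Taylor polynomial of t ↦ 1/tan((x−t)/2) at x_I. -/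
open MeasureTheory Real

/-!
Since the atom `a` is orthogonal to all polynomials of degree `≤ m` on `I`, we may replace the
kernel `t ↦ cot ((x - t) / 2)` by its remainder after the Taylor polynomial of degree `m`, which
Lagrange bounds by `sup_I |f^(m+1)| · |I|^(m+1) / m!`. Differentiating
`cot' = -(1 + cot²)` repeatedly, the `n`-th derivative of the kernel is a polynomial of degree
`n + 1` in `cot ((x - t) / 2)`, and `|cot u| ≤ π / |u|` for `|u| ≤ 2π/3`; since
`|x - t| ≥ |x - x_I| / 2` on `I`, the `(m+1)`-st derivative is `O(|x - x_I|^-(m+2))` there.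
Integrating against `‖a‖_∞ ≤ |I|^(-1/q)` over `I` gives the factor `|I|^(m+2-1/q)`.
-/

open Set Polynomial
open scoped Nat

namespace Real

theorem div_pi_le_sin {u : ℝ} (hu₀ : 0 ≤ u) (hu : u ≤ 2 * π / 3) : u / π ≤ sin u := by
  have hπ := pi_pos
  rcases le_total u (π / 2) with h | h
  · calc u / π ≤ 2 / π * u := by rw [div_mul_eq_mul_div]; gcongr; linarith
      _ ≤ sin u := mul_le_sin hu₀ h
  · calc u / π ≤ 2 / π * (π - u) := by rw [div_mul_eq_mul_div]; gcongr; linarith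
      _ ≤ sin (π - u) := mul_le_sin (by linarith) (by linarith)
      _ = sin u := sin_pi_sub u

theorem abs_div_pi_le_abs_sin {u : ℝ} (hu : |u| ≤ 2 * π / 3) : |u| / π ≤ |sin u| := by
  rcases le_total 0 u with h | h
  · rw [abs_of_nonneg h] at hu ⊢
    exact (div_pi_le_sin h hu).trans (le_abs_self _)
  · rw [abs_of_nonpos h] at hu ⊢
    rw [← abs_neg, ← sin_neg]
    exact (div_pi_le_sin (by linarith) hu).trans (le_abs_self _)

theorem sin_half_ne_zero {y : ℝ} (hy₀ : y ≠ 0) (hy : |y| < 2 * π) : sin (y / 2) ≠ 0 := by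
  obtain ⟨h₁, h₂⟩ := abs_lt.1 hy
  rw [Ne, sin_eq_zero_iff_of_lt_of_lt (by linarith) (by linarith)]
  exact div_ne_zero hy₀ two_ne_zero

theorem abs_cot_le_pi_div_abs {u : ℝ} (hu : |u| ≤ 2 * π / 3) : |cot u| ≤ π / |u| := by
  rcases eq_or_ne u 0 with rfl | hu₀
  · simp [cot_eq_cos_div_sin]
  have hu' : 0 < |u| := abs_pos.2 hu₀
  have hsin := abs_div_pi_le_abs_sin hu
  have hsin' : 0 < |sin u| := lt_of_lt_of_le (by positivity) hsin
  rw [cot_eq_cos_div_sin, abs_div, div_le_div_iff₀ hsin' hu']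
  rw [div_le_iff₀ pi_pos] at hsin
  nlinarith [abs_cos_le_one u]

end Real

theorem Polynomial.abs_eval_le_of_natDegree_le (p : ℝ[X]) {d : ℕ} (hd : p.natDegree ≤ d)
    {y B : ℝ} (hB : 1 ≤ B) (hy : |y| ≤ B) :
    |p.eval y| ≤ (∑ i ∈ Finset.range (d + 1), |p.coeff i|) * B ^ d := by
  rw [eval_eq_sum_range' (Nat.lt_succ_of_le hd), Finset.sum_mul]
  refine (Finset.abs_sum_le_sum_abs _ _).trans (Finset.sum_le_sum fun i hi => ?_)
  rw [abs_mul, abs_pow]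
  gcongr
  calc |y| ^ i ≤ B ^ i := by gcongr
    _ ≤ B ^ d := pow_le_pow_right₀ hB (Nat.lt_succ_iff.mp (Finset.mem_range.mp hi))

noncomputable def cotDerivPoly : ℕ → ℝ[X]
  | 0 => X
  | n + 1 => derivative (cotDerivPoly n) * (C (1 / 2) * (1 + X ^ 2))

theorem natDegree_cotDerivPoly_le (n : ℕ) : (cotDerivPoly n).natDegree ≤ n + 1 := by
  induction n with
  | zero => simp [cotDerivPoly]
  | succ n ih =>
    have hfactor : (C (1 / 2 : ℝ) * (1 + X ^ 2)).natDegree ≤ 2 := by compute_degree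
    have hderiv := (natDegree_derivative_le (cotDerivPoly n)).trans (Nat.sub_le_sub_right ih 1)
    exact natDegree_mul_le.trans (by omega)

theorem hasDerivAt_cot_half_sub {x t : ℝ} (h : sin ((x - t) / 2) ≠ 0) :
    HasDerivAt (fun s => cot ((x - s) / 2)) ((1 + cot ((x - t) / 2) ^ 2) / 2) t := by
  have hu : HasDerivAt (fun s : ℝ => (x - s) / 2) (-1 / 2) t :=
    ((hasDerivAt_id t).const_sub x).div_const 2
  have hcos : HasDerivAt (fun s => cos ((x - s) / 2)) (-sin ((x - t) / 2) * (-1 / 2)) t :=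
    (hasDerivAt_cos _).comp t hu
  have hsin : HasDerivAt (fun s => sin ((x - s) / 2)) (cos ((x - t) / 2) * (-1 / 2)) t :=
    (hasDerivAt_sin _).comp t hu
  simp only [cot_eq_cos_div_sin]
  refine (hcos.fun_div hsin h).congr_deriv ?_
  field_simp
  ring

theorem contDiffAt_cot_half_sub {x t : ℝ} (h : sin ((x - t) / 2) ≠ 0) {n : WithTop ℕ∞} :
    ContDiffAt ℝ n (fun s => cot ((x - s) / 2)) t := by
  simp only [cot_eq_cos_div_sin]
  exact (contDiff_cos.contDiffAt.comp t (by fun_prop)).div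
    (contDiff_sin.contDiffAt.comp t (by fun_prop)) h

theorem iteratedDeriv_cot_half_sub (n : ℕ) {x t : ℝ} (h : sin ((x - t) / 2) ≠ 0) :
    iteratedDeriv n (fun s => cot ((x - s) / 2)) t =
      (cotDerivPoly n).eval (cot ((x - t) / 2)) := by
  induction n generalizing t with
  | zero => simp [cotDerivPoly]
  | succ n ih =>
    have hopen : IsOpen {s : ℝ | sin ((x - s) / 2) ≠ 0} := isOpen_ne.preimage (by fun_prop)
    have heq : iteratedDeriv n (fun s => cot ((x - s) / 2)) =ᶠ[nhds t]
        fun s => (cotDerivPoly n).eval (cot ((x - s) / 2)) :=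
      Filter.eventually_of_mem (hopen.mem_nhds h) fun s hs => ih hs
    have hd : HasDerivAt (fun s => (cotDerivPoly n).eval (cot ((x - s) / 2))) _ t :=
      ((cotDerivPoly n).hasDerivAt _).comp t (hasDerivAt_cot_half_sub h)
    rw [iteratedDeriv_succ, heq.deriv_eq, hd.deriv, cotDerivPoly]
    simp only [eval_mul, eval_add, eval_one, eval_pow, eval_X, eval_C]
    ring

theorem exists_abs_iteratedDeriv_cot_half_sub_le (n : ℕ) :
    ∃ K > 0, ∀ x t δ : ℝ, 0 < δ → δ ≤ |x - t| → |x - t| ≤ 4 * π / 3 →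
      |iteratedDeriv n (fun s => cot ((x - s) / 2)) t| ≤ K / δ ^ (n + 1) := by
  set S := ∑ i ∈ Finset.range (n + 2), |(cotDerivPoly n).coeff i|
  have hS : 0 ≤ S := Finset.sum_nonneg fun i _ => abs_nonneg _
  refine ⟨(S + 1) * (2 * π) ^ (n + 1), by positivity, fun x t δ hδ hlo hhi => ?_⟩
  have hpos : 0 < |x - t| := hδ.trans_le hlo
  have hu : |(x - t) / 2| = |x - t| / 2 := by rw [abs_div, abs_two]
  have hcot : |cot ((x - t) / 2)| ≤ 2 * π / |x - t| := by
    calc |cot ((x - t) / 2)| ≤ π / |(x - t) / 2| := abs_cot_le_pi_div_abs (by rw [hu]; linarith)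
      _ = 2 * π / |x - t| := by rw [hu]; field_simp
  have hB : 1 ≤ 2 * π / |x - t| := by rw [le_div_iff₀ hpos]; linarith [pi_pos]
  rw [iteratedDeriv_cot_half_sub n (sin_half_ne_zero (abs_pos.1 hpos) (by linarith [pi_pos]))]
  calc _ ≤ S * (2 * π / |x - t|) ^ (n + 1) :=
        (cotDerivPoly n).abs_eval_le_of_natDegree_le (natDegree_cotDerivPoly_le n) hB hcot
    _ ≤ (S + 1) * (2 * π / δ) ^ (n + 1) := by gcongr; linarith
    _ = _ := by rw [div_pow]; ring

theorem integral_mul_eval_eq_zero_of_moments {a : ℝ → ℝ} {lo hi : ℝ} {m : ℕ}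
    (ha : IntervalIntegrable a volume lo hi)
    (hmom : ∀ j ≤ m, ∫ t in lo..hi, a t * t ^ j = 0) {p : ℝ[X]} (hp : p.natDegree ≤ m) :
    ∫ t in lo..hi, a t * p.eval t = 0 := by
  have hterm : ∀ i ∈ Finset.range (m + 1),
      IntervalIntegrable (fun t => p.coeff i * (a t * t ^ i)) volume lo hi :=
    fun i _ => (ha.mul_continuousOn (continuous_pow i).continuousOn).const_mul _
  simp_rw [eval_eq_sum_range' (Nat.lt_succ_of_le hp), Finset.mul_sum, mul_left_comm (a _)]
  rw [intervalIntegral.integral_finsetSum hterm]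
  refine Finset.sum_eq_zero fun i hi => ?_
  rw [intervalIntegral.integral_const_mul, hmom i (Nat.lt_succ_iff.mp (Finset.mem_range.mp hi)),
    mul_zero]

theorem exists_natDegree_le_taylorWithinEval_eq_eval (f : ℝ → ℝ) (n : ℕ) (s : Set ℝ)
    (x₀ : ℝ) : ∃ p : ℝ[X], p.natDegree ≤ n ∧ ∀ x, taylorWithinEval f n s x₀ x = p.eval x := by
  refine ⟨∑ k ∈ Finset.range (n + 1),
    C (iteratedDerivWithin k f s x₀ / k !) * (X - C x₀) ^ k, ?_, fun x => ?_⟩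
  · refine natDegree_sum_le_of_forall_le _ _ fun k hk => (natDegree_C_mul_le _ _).trans ?_
    rw [natDegree_pow, natDegree_X_sub_C, mul_one]
    exact Nat.lt_succ_iff.mp (Finset.mem_range.mp hk)
  · simp only [taylor_within_apply, eval_finsetSum, eval_mul, eval_C, eval_pow, eval_sub, eval_X,
      smul_eq_mul]
    exact Finset.sum_congr rfl fun k _ => by ring

theorem abs_integral_mul_le_of_moments {a f : ℝ → ℝ} {lo hi A M : ℝ} {m : ℕ} (hlohi : lo ≤ hi)
    (ha : IntervalIntegrable a volume lo hi) (hA : ∀ t ∈ Icc lo hi, |a t| ≤ A)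
    (hmom : ∀ j ≤ m, ∫ t in lo..hi, a t * t ^ j = 0)
    (hf : ContDiffOn ℝ (m + 1) f (Icc lo hi))
    (hM : ∀ t ∈ Icc lo hi, |iteratedDerivWithin (m + 1) f (Icc lo hi) t| ≤ M) :
    |∫ t in lo..hi, a t * f t| ≤ A * (M * (hi - lo) ^ (m + 1) / m !) * (hi - lo) := by
  obtain ⟨p, hpdeg, hp⟩ := exists_natDegree_le_taylorWithinEval_eq_eval f m (Icc lo hi) lo
  have hf_int : IntervalIntegrable (fun t => a t * f t) volume lo hi :=
    ha.mul_continuousOn (by rw [uIcc_of_le hlohi]; exact hf.continuousOn)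
  have hp_int : IntervalIntegrable (fun t => a t * p.eval t) volume lo hi :=
    ha.mul_continuousOn p.continuous.continuousOn
  have hsub : ∫ t in lo..hi, a t * f t = ∫ t in lo..hi, a t * (f t - p.eval t) := by
    simp_rw [mul_sub]
    rw [intervalIntegral.integral_sub hf_int hp_int,
      integral_mul_eval_eq_zero_of_moments ha hmom hpdeg, sub_zero]
  rw [hsub, ← Real.norm_eq_abs]
  refine (intervalIntegral.norm_integral_le_of_norm_le_const fun t ht => ?_).trans_eq
    (by rw [abs_of_nonneg (sub_nonneg.2 hlohi)])
  have ht' : t ∈ Icc lo hi := Ioc_subset_Icc_self (by rwa [uIoc_of_le hlohi] at ht)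
  have hrem := taylor_mean_remainder_bound hlohi hf ht'
    (fun y hy => (Real.norm_eq_abs _).trans_le (hM y hy))
  rw [hp, Real.norm_eq_abs] at hrem
  have hA₀ : 0 ≤ A := (abs_nonneg _).trans (hA lo (left_mem_Icc.2 hlohi))
  have hM₀ : 0 ≤ M := (abs_nonneg _).trans (hM lo (left_mem_Icc.2 hlohi))
  rw [Real.norm_eq_abs, abs_mul]
  gcongr
  · exact hA t ht'
  · refine hrem.trans ?_
    gcongr
    · linarith [ht'.1]
    · exact ht'.2

theorem abs_sub_bounds_of_mem_Icc {x c r t : ℝ} (ht : t ∈ Icc (c - r) (c + r))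
    (hfar : 2 * r ≤ |x - c|) : |x - c| / 2 ≤ |x - t| ∧ |x - t| ≤ |x - c| + r := by
  have h₁ := abs_sub_le x t c
  have h₂ := abs_sub_le x c t
  have h₃ : |t - c| ≤ r := abs_le.2 ⟨by linarith [ht.1], by linarith [ht.2]⟩
  rw [abs_sub_comm c t] at h₂
  constructor <;> linarith

namespace IsHqAtom

variable {q c r : ℝ} {a : ℝ → ℝ}

theorem intervalIntegrable (ha : IsHqAtom q c r a) (lo hi : ℝ) :
    IntervalIntegrable a volume lo hi :=
  intervalIntegrable_const.mono_fun' ha.1.aestronglyMeasurable (ae_of_all _ ha.2.2.1)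

theorem integral_mul_pow_eq_zero (ha : IsHqAtom q c r a) {m j : ℕ}
    (hm : (m : ℝ) = (⌊1 / q⌋ : ℤ) - 1) (hj : j ≤ m) :
    ∫ t in (c - r)..(c + r), a t * t ^ j = 0 := by
  have hfloor := Int.floor_le (1 / q)
  have hjm : (j : ℝ) ≤ m := by exact_mod_cast hj
  exact ha.2.2.2 j (by linarith)

end IsHqAtom

theorem atom_moment_estimate_general (q : ℝ) (m : ℕ)
    (hm : (m : ℝ) = (⌊1 / q⌋ : ℤ) - 1) :
    ∃ C > 0, ∀ (a : ℝ → ℝ) (x_I r x : ℝ), 0 < r → r < π / 4 →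
      IsHqAtom q x_I r a →
      2 * r ≤ |x - x_I| → |x - x_I| ≤ π →
      |∫ t in (x_I - r)..(x_I + r), a t / Real.tan ((x - t) / 2)| ≤
        C * (2 * r) ^ ((m : ℝ) + 2 - 1 / q) / |x - x_I| ^ (m + 2) := by
  obtain ⟨K, hK, hderiv⟩ := exists_abs_iteratedDeriv_cot_half_sub_le (m + 1)
  refine ⟨K * 2 ^ (m + 2) / m !, by positivity, ?_⟩
  intro a x_I r x hr hrπ ha hfar hnear
  have hdist : ∀ t ∈ Icc (x_I - r) (x_I + r),
      |x - x_I| / 2 ≤ |x - t| ∧ |x - t| ≤ 4 * π / 3 := fun t ht =>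
    have h := abs_sub_bounds_of_mem_Icc ht hfar
    ⟨h.1, by linarith [pi_pos]⟩
  have hsmooth : ∀ t ∈ Icc (x_I - r) (x_I + r),
      ContDiffAt ℝ (m + 1) (fun s => cot ((x - s) / 2)) t := fun t ht =>
    contDiffAt_cot_half_sub <| sin_half_ne_zero (abs_pos.1 (by linarith [hdist t ht]))
      (by linarith [hdist t ht, pi_pos])
  have key := abs_integral_mul_le_of_moments (by linarith) (ha.intervalIntegrable _ _)
    (fun t _ => ha.2.2.1 t) (fun j hj => ha.integral_mul_pow_eq_zero hm hj)
    (fun t ht => (hsmooth t ht).contDiffWithinAt) fun t ht => by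
      rw [iteratedDerivWithin_eq_iteratedDeriv (uniqueDiffOn_Icc (by linarith)) (hsmooth t ht) ht]
      exact hderiv x t _ (by linarith) (hdist t ht).1 (hdist t ht).2
  simp_rw [div_eq_mul_inv (a _), tan_inv_eq_cot]
  refine key.trans_eq ?_
  rw [show x_I + r - (x_I - r) = 2 * r by ring,
    show (m : ℝ) + 2 - 1 / q = -(1 / q) + ((m + 2 : ℕ) : ℝ) by push_cast; ring,
    rpow_add (by positivity), rpow_natCast, div_pow]
  field_simp
  ring

/-- **Moment estimate.** Let `0 < q ≤ 1` and `m = [1/q] - 1`. For an `H^q`-atom `a` supported in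
the interval `I` of center `x_I` and radius `r < π/4` and `x` outside `Ĩ` (on the torus),
`|∫ a(t)/tan((x-t)/2) dt| ≤ C |I|^{m+2-1/q} / |x - x_I|^{m+2}`. -/
theorem atom_moment_estimate (q : ℝ) (m : ℕ) (hq0 : 0 < q) (hq1 : q ≤ 1)
    (hm : (m : ℝ) = (⌊1 / q⌋ : ℤ) - 1) :
    ∃ C > 0, ∀ (a : ℝ → ℝ) (x_I r x : ℝ), 0 < r → r < π / 4 →
      IsHqAtom q x_I r a →
      2 * r ≤ |x - x_I| → |x - x_I| ≤ π →
      |∫ t in (x_I - r)..(x_I + r), a t / Real.tan ((x - t) / 2)| ≤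
        C * (2 * r) ^ ((m : ℝ) + 2 - 1 / q) / |x - x_I| ^ (m + 2) :=
  atom_moment_estimate_general q m hm
end

section
/- Let b and f be trigonometric polynomials with f(z) = Σ_{n≥0} a_n z^n, and set F(x) = f(e^{−ix}). Then the analytic (Cauchy) projection of the periodic bilinear Hilbert transform H(b,F)(x) = p.v. ∫_T b(x+t) F(2t) / tan((x−t)/2) dt equals, up to a multiplicative constant, Σ_{m,n ∈ N} a_n b_{m+n} sign(m−n) e^{2imx}, where b_k are the Fourier coefficients of b. -/
/-!
Expanding `b(x + t) F(2t)` reduces the principal value to those of `e^{ipt} / tan((x - t)/2)`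
with `p = k - 2n`. Folding the two sides of the singularity together, the truncated integral of
`e^{ipt} / tan((x - t)/2)` is `-2i e^{ipx} ∫_ε^π sin(ps) / tan(s/2) ds`, and `sin(ps) cot(s/2)` is a
trigonometric polynomial whose integral over `(0, π)` is `π sign p`. Hence
`H(b, F)(x) = -2πi Σ β_k a_n sign(k - 2n) e^{i(2k - 2n)x}`, and its coefficient at frequency `2m`
collects the terms with `k = m + n`.
-/

open MeasureTheory Real Filter

/-- The analytic trigonometric polynomial symbol `b(x) = Σ_{k ≤ M} β_k e^{ikx}`. -/
noncomputable def symbolPoly (M : ℕ) (β : ℕ → ℂ) (x : ℝ) : ℂ :=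
  ∑ k ∈ Finset.range (M + 1), β k * Complex.exp (k * Complex.I * x)

/-- `F(x) = f(e^{-ix}) = Σ_{n ≤ N} a_n e^{-inx}` for `f(z) = Σ a_n z^n`. -/
noncomputable def checkPoly (N : ℕ) (a : ℕ → ℂ) (x : ℝ) : ℂ :=
  ∑ n ∈ Finset.range (N + 1), a n * Complex.exp (-(n * Complex.I * x))

open Topology

/-- The mean `(D_{m-1} + D_m) / 2` of two consecutive Dirichlet kernels (for `m ≥ 1`); it equals
`sin (m s) cot (s / 2)`. -/
noncomputable def cotKernel (m : ℕ) (s : ℝ) : ℝ :=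
  ∑ j ∈ Finset.range m, (cos (j * s) + cos ((j + 1 : ℕ) * s))

theorem sin_mul_cos_half_eq (m : ℕ) (s : ℝ) :
    sin (m * s) * cos (s / 2) = sin (s / 2) * cotKernel m s := by
  induction m with
  | zero => simp [cotKernel]
  | succ m ih =>
    rw [cotKernel, Finset.sum_range_succ, ← cotKernel, mul_add, ← ih]
    rw [show ((m + 1 : ℕ) : ℝ) * s = m * s + 2 * (s / 2) by push_cast; ring]
    simp only [sin_add, cos_add, sin_two_mul, cos_two_mul]
    linear_combination (2 * sin (m * s) * cos (s / 2)) * sin_sq_add_cos_sq (s / 2)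

theorem sin_mul_div_tan_half_eq {s : ℝ} (hs : sin (s / 2) ≠ 0) (m : ℕ) :
    sin (m * s) / tan (s / 2) = cotKernel m s := by
  rw [tan_eq_sin_div_cos, div_div_eq_mul_div, div_eq_iff hs, sin_mul_cos_half_eq, mul_comm]

theorem integral_cos_nat_mul (j : ℕ) :
    ∫ s in (0 : ℝ)..π, cos (j * s) = if j = 0 then π else 0 := by
  split_ifs with hj
  · simp [hj]
  · rw [intervalIntegral.integral_comp_mul_left (fun s => cos s) (Nat.cast_ne_zero.2 hj),
      integral_cos]
    simp [sin_nat_mul_pi]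

theorem integral_cotKernel (m : ℕ) :
    ∫ s in (0 : ℝ)..π, cotKernel m s = Real.sign (m : ℝ) * π := by
  have hcos : ∀ j : ℕ, IntervalIntegrable (fun s : ℝ => cos (j * s)) volume 0 π := fun j =>
    (continuous_cos.comp (continuous_const_mul _)).intervalIntegrable _ _
  unfold cotKernel
  rw [intervalIntegral.integral_finsetSum fun j _ => (hcos j).add (hcos (j + 1))]
  simp only [intervalIntegral.integral_add (hcos _) (hcos _), integral_cos_nat_mul,
    Nat.succ_ne_zero, if_false, add_zero, Finset.sum_ite_eq', Finset.mem_range]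
  rcases Nat.eq_zero_or_pos m with rfl | hm
  · simp
  · rw [if_pos hm, Real.sign_of_pos (Nat.cast_pos.2 hm), one_mul]

theorem tendsto_integral_sin_nat_mul_div_tan_half (m : ℕ) :
    Tendsto (fun ε => ∫ s in ε..π, sin (m * s) / tan (s / 2)) (𝓝[>] 0)
      (𝓝 (Real.sign (m : ℝ) * π)) := by
  have hK : Continuous (cotKernel m) := by unfold cotKernel; fun_prop
  have hprim : Tendsto (fun ε => ∫ s in ε..π, cotKernel m s) (𝓝 0)
      (𝓝 (∫ s in (0 : ℝ)..π, cotKernel m s)) := by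
    simpa [intervalIntegral.integral_symm π] using ((intervalIntegral.continuous_primitive
      (μ := volume) (fun a b => hK.intervalIntegrable a b) π).tendsto 0).neg
  rw [← integral_cotKernel]
  refine (hprim.mono_left nhdsWithin_le_nhds).congr' ?_
  filter_upwards [Ioo_mem_nhdsGT pi_pos] with ε hε
  refine intervalIntegral.integral_congr fun s hs => (sin_mul_div_tan_half_eq ?_ m).symm
  rw [Set.uIcc_of_le hε.2.le] at hs
  exact (sin_pos_of_pos_of_lt_pi (by linarith [hs.1, hε.1]) (by linarith [hs.2, pi_pos])).ne'

theorem tendsto_integral_sin_int_mul_div_tan_half (p : ℤ) :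
    Tendsto (fun ε => ∫ s in ε..π, sin (p * s) / tan (s / 2)) (𝓝[>] 0)
      (𝓝 (Real.sign (p : ℝ) * π)) := by
  obtain ⟨m, rfl | rfl⟩ := Int.eq_nat_or_neg p
  · exact_mod_cast tendsto_integral_sin_nat_mul_div_tan_half m
  · have h := (tendsto_integral_sin_nat_mul_div_tan_half m).neg
    simp only [← intervalIntegral.integral_neg, ← neg_div, ← sin_neg, ← neg_mul] at h
    simpa [Real.sign_neg] using h

noncomputable def truncatedHilbert (φ : ℝ → ℂ) (x ε : ℝ) : ℂ :=
  ∫ t in Set.Ioo (x - π) (x + π) \ Set.Ioo (x - ε) (x + ε), φ t / (tan ((x - t) / 2) : ℂ)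

theorem continuousOn_div_tan {φ : ℝ → ℂ} {u : ℝ → ℝ} (hφ : Continuous φ) (hu : Continuous u) :
    ContinuousOn (fun t => φ t / (tan (u t) : ℂ)) {t | sin (u t) ≠ 0} := by
  -- with `tan = sin / cos` and `y / 0 = 0`, `(tan y)⁻¹ = cos y / sin y` holds for every `y`
  have h : (fun t => φ t / (tan (u t) : ℂ))
      = fun t => φ t * ((cos (u t) / sin (u t) : ℝ) : ℂ) := by
    ext t
    rw [div_eq_mul_inv, ← Complex.ofReal_inv, tan_eq_sin_div_cos, inv_div]
  rw [h]
  exact hφ.continuousOn.mul (Complex.continuous_ofReal.comp_continuousOn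
    ((by fun_prop : Continuous fun t => cos (u t)).continuousOn.div
      (by fun_prop : Continuous fun t => sin (u t)).continuousOn fun _ ht => ht))

theorem Ioo_diff_Ioo_eq_union (x r : ℝ) {ε : ℝ} (hε : 0 ≤ ε) :
    Set.Ioo (x - r) (x + r) \ Set.Ioo (x - ε) (x + ε)
      = Set.Ioc (x - r) (x - ε) ∪ Set.Ico (x + ε) (x + r) := by
  ext t
  simp only [Set.mem_sdiff, Set.mem_Ioo, Set.mem_union, Set.mem_Ioc, Set.mem_Ico, not_and,
    not_lt]
  constructor
  · rintro ⟨⟨h1, h2⟩, h3⟩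
    by_cases ht : t ≤ x - ε
    · exact Or.inl ⟨h1, ht⟩
    · exact Or.inr ⟨h3 (by linarith), h2⟩
  · rintro (⟨h1, h2⟩ | ⟨h1, h2⟩)
    · exact ⟨⟨h1, by linarith⟩, fun h => by linarith⟩
    · exact ⟨⟨by linarith, h2⟩, fun h => by linarith⟩

theorem integrableOn_div_tan_punctured {φ : ℝ → ℂ} (hφ : Continuous φ) (x : ℝ) {ε : ℝ}
    (hε : 0 < ε) :
    IntegrableOn (fun t => φ t / (tan ((x - t) / 2) : ℂ))
      (Set.Ioo (x - π) (x + π) \ Set.Ioo (x - ε) (x + ε)) := by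
  have hK : IsCompact (Set.Icc (x - π) (x - ε) ∪ Set.Icc (x + ε) (x + π)) :=
    isCompact_Icc.union isCompact_Icc
  refine (((continuousOn_div_tan hφ (by fun_prop)).mono ?_).integrableOn_compact hK).mono_set ?_
  · rintro t (⟨h1, h2⟩ | ⟨h1, h2⟩)
    · exact (sin_pos_of_pos_of_lt_pi (by linarith) (by linarith [pi_pos])).ne'
    · exact (sin_neg_of_neg_of_neg_pi_lt (by linarith) (by linarith [pi_pos])).ne
  · rw [Ioo_diff_Ioo_eq_union x π hε.le]
    exact Set.union_subset_union Set.Ioc_subset_Icc_self Set.Ico_subset_Icc_self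

theorem truncatedHilbert_eq_integral {φ : ℝ → ℂ} (hφ : Continuous φ) (x : ℝ) {ε : ℝ}
    (hε : 0 < ε) (hεπ : ε ≤ π) :
    truncatedHilbert φ x ε = ∫ s in ε..π, (φ (x - s) - φ (x + s)) / (tan (s / 2) : ℂ) := by
  have hint := integrableOn_div_tan_punctured hφ x hε
  rw [Ioo_diff_Ioo_eq_union x π hε.le] at hint
  have hdisj : Disjoint (Set.Ioc (x - π) (x - ε)) (Set.Ico (x + ε) (x + π)) := by
    rw [Set.disjoint_left]
    rintro t ⟨_, ht⟩ ⟨ht', _⟩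
    linarith
  have hcont : ∀ ψ : ℝ → ℂ, Continuous ψ →
      IntervalIntegrable (fun s => ψ s / (tan (s / 2) : ℂ)) volume ε π := fun ψ hψ =>
    ((continuousOn_div_tan hψ (by fun_prop)).mono fun s hs => by
      rw [Set.uIcc_of_le hεπ] at hs
      exact (sin_pos_of_pos_of_lt_pi (by linarith [hs.1]) (by linarith [hs.2, pi_pos])).ne'
      ).intervalIntegrable
  have hneg : ∀ s : ℝ, φ (x + s) / (tan ((x - (x + s)) / 2) : ℂ)
      = -(φ (x + s) / (tan (s / 2) : ℂ)) := fun s => by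
    rw [show (x - (x + s)) / 2 = -(s / 2) by ring, tan_neg, Complex.ofReal_neg, div_neg]
  calc truncatedHilbert φ x ε
      = (∫ t in (x - π)..(x - ε), φ t / (tan ((x - t) / 2) : ℂ))
          + ∫ t in (x + ε)..(x + π), φ t / (tan ((x - t) / 2) : ℂ) := by
        rw [truncatedHilbert, Ioo_diff_Ioo_eq_union x π hε.le, setIntegral_union hdisj
          measurableSet_Ico (hint.mono_set Set.subset_union_left)
          (hint.mono_set Set.subset_union_right), integral_Ico_eq_integral_Ioc,
          intervalIntegral.integral_of_le (by linarith),
          intervalIntegral.integral_of_le (by linarith)]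
    _ = (∫ s in ε..π, φ (x - s) / (tan (s / 2) : ℂ))
          + ∫ s in ε..π, -(φ (x + s) / (tan (s / 2) : ℂ)) := by
        congr 1
        · simpa only [sub_sub_cancel] using (intervalIntegral.integral_comp_sub_left
            (fun t => φ t / (tan ((x - t) / 2) : ℂ)) (a := ε) (b := π) x).symm
        · simpa only [hneg] using (intervalIntegral.integral_comp_add_left
            (fun t => φ t / (tan ((x - t) / 2) : ℂ)) (a := ε) (b := π) x).symm
    _ = _ := by
        rw [intervalIntegral.integral_neg, ← sub_eq_add_neg, ← intervalIntegral.integral_sub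
          (hcont (fun s => φ (x - s)) (by fun_prop)) (hcont (fun s => φ (x + s)) (by fun_prop))]
        simp only [sub_div]

theorem truncatedHilbert_finset_sum {ι : Type*} (s : Finset ι) (c : ι → ℂ) {φ : ι → ℝ → ℂ}
    (hφ : ∀ i ∈ s, Continuous (φ i)) (x : ℝ) {ε : ℝ} (hε : 0 < ε) :
    truncatedHilbert (fun t => ∑ i ∈ s, c i * φ i t) x ε
      = ∑ i ∈ s, c i * truncatedHilbert (φ i) x ε := by
  simp only [truncatedHilbert, Finset.sum_div, mul_div_assoc]
  rw [integral_finsetSum s fun i hi =>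
    (integrableOn_div_tan_punctured (hφ i hi) x hε).const_mul (c i)]
  simp only [integral_const_mul]

theorem exp_sub_exp_eq_mul_sin (p : ℤ) (x s : ℝ) :
    Complex.exp (p * Complex.I * ↑(x - s)) - Complex.exp (p * Complex.I * ↑(x + s))
      = -2 * Complex.I * Complex.exp (p * Complex.I * x) * ↑(sin (p * s)) := by
  have h : ∀ y : ℝ, Complex.exp (p * Complex.I * ↑(x + y))
      = Complex.exp (p * Complex.I * x) * Complex.exp (↑(p * y) * Complex.I) := fun y => by
    rw [← Complex.exp_add]
    push_cast
    ring_nf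
  rw [sub_eq_add_neg x, h, h, Complex.exp_mul_I, Complex.exp_mul_I]
  push_cast
  simp only [mul_neg, Complex.cos_neg, Complex.sin_neg]
  ring

theorem truncatedHilbert_exp (p : ℤ) (x : ℝ) {ε : ℝ} (hε : 0 < ε) (hεπ : ε ≤ π) :
    truncatedHilbert (fun t => Complex.exp (p * Complex.I * t)) x ε
      = -2 * Complex.I * Complex.exp (p * Complex.I * x)
          * ↑(∫ s in ε..π, sin (p * s) / tan (s / 2)) := by
  rw [truncatedHilbert_eq_integral (by fun_prop) x hε hεπ, ← intervalIntegral.integral_ofReal,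
    ← intervalIntegral.integral_const_mul]
  refine intervalIntegral.integral_congr fun s _ => ?_
  simp only [exp_sub_exp_eq_mul_sin, Complex.ofReal_div, mul_div_assoc]

theorem tendsto_truncatedHilbert_exp (p : ℤ) (x : ℝ) :
    Tendsto (truncatedHilbert (fun t => Complex.exp (p * Complex.I * t)) x) (𝓝[>] 0)
      (𝓝 (-(2 * π * Complex.I) * Real.sign (p : ℝ) * Complex.exp (p * Complex.I * x))) := by
  rw [show -(2 * π * Complex.I) * Real.sign (p : ℝ) * Complex.exp (p * Complex.I * x)
      = -2 * Complex.I * Complex.exp (p * Complex.I * x) * ↑(Real.sign (p : ℝ) * π) by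
    push_cast; ring]
  refine (((Complex.continuous_ofReal.tendsto _).comp
    (tendsto_integral_sin_int_mul_div_tan_half p)).const_mul _).congr' ?_
  filter_upwards [Ioo_mem_nhdsGT pi_pos] with ε hε
  exact (truncatedHilbert_exp p x hε.1 hε.2.le).symm

theorem tendsto_truncatedHilbert_trigPoly {ι : Type*} (s : Finset ι) (c : ι → ℂ) (p : ι → ℤ)
    (x : ℝ) :
    Tendsto (truncatedHilbert (fun t => ∑ i ∈ s, c i * Complex.exp (p i * Complex.I * t)) x)
      (𝓝[>] 0) (𝓝 (∑ i ∈ s, c i *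
        (-(2 * π * Complex.I) * Real.sign (p i : ℝ) * Complex.exp (p i * Complex.I * x)))) := by
  refine (tendsto_finsetSum s fun i _ =>
    (tendsto_truncatedHilbert_exp (p i) x).const_mul (c i)).congr' ?_
  filter_upwards [self_mem_nhdsWithin] with ε hε
  exact (truncatedHilbert_finset_sum s c (fun i _ => by fun_prop) x hε).symm

theorem integral_exp_int_mul_I (p : ℤ) :
    ∫ x in (0 : ℝ)..2 * π, Complex.exp (p * Complex.I * x)
      = if p = 0 then (2 * π : ℂ) else 0 := by
  split_ifs with hp
  · simp [hp]
  · rw [integral_exp_mul_complex (mul_ne_zero (Int.cast_ne_zero.2 hp) Complex.I_ne_zero),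
      show (p : ℂ) * Complex.I * ↑(2 * π) = p * (2 * π * Complex.I) by push_cast; ring,
      Complex.exp_int_mul_two_pi_mul_I]
    simp

theorem fourierCoeff_trigPoly {ι : Type*} (s : Finset ι) (c : ι → ℂ) (p : ι → ℤ) (K : ℤ) :
    ((1 / (2 * π) : ℝ) : ℂ) * ∫ x in (0 : ℝ)..2 * π,
        (∑ i ∈ s, c i * Complex.exp (p i * Complex.I * x)) * Complex.exp (-(K * Complex.I * x))
      = ∑ i ∈ s, if p i = K then c i else 0 := by
  have h : ∀ x : ℝ, (∑ i ∈ s, c i * Complex.exp (p i * Complex.I * x))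
      * Complex.exp (-(K * Complex.I * x))
      = ∑ i ∈ s, c i * Complex.exp ((p i - K : ℤ) * Complex.I * x) := fun x => by
    rw [Finset.sum_mul]
    refine Finset.sum_congr rfl fun i _ => ?_
    rw [mul_assoc, ← Complex.exp_add]
    push_cast
    ring_nf
  simp only [h]
  rw [intervalIntegral.integral_finsetSum fun i _ =>
    (by fun_prop : Continuous _).intervalIntegrable _ _, Finset.mul_sum]
  refine Finset.sum_congr rfl fun i _ => ?_
  simp only [intervalIntegral.integral_const_mul, integral_exp_int_mul_I, sub_eq_zero]
  have hπ : (π : ℂ) ≠ 0 := Complex.ofReal_ne_zero.2 pi_ne_zero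
  split_ifs
  · push_cast
    field_simp
  · simp

theorem symbolPoly_mul_checkPoly (M N : ℕ) (β a : ℕ → ℂ) (x t : ℝ) :
    symbolPoly M β (x + t) * checkPoly N a (2 * t)
      = ∑ i ∈ Finset.range (M + 1) ×ˢ Finset.range (N + 1),
          β i.1 * a i.2 * Complex.exp (i.1 * Complex.I * x)
            * Complex.exp (((i.1 : ℤ) - 2 * i.2 : ℤ) * Complex.I * t) := by
  rw [symbolPoly, checkPoly, Finset.sum_mul_sum, Finset.sum_product]
  refine Finset.sum_congr rfl fun k _ => Finset.sum_congr rfl fun n _ => ?_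
  rw [mul_mul_mul_comm, ← Complex.exp_add, mul_assoc _ (Complex.exp _), ← Complex.exp_add]
  congr 2
  push_cast
  ring

theorem tendsto_truncatedHilbert_symbolPoly_mul_checkPoly (M N : ℕ) (β a : ℕ → ℂ) (x : ℝ) :
    Tendsto (truncatedHilbert (fun t => symbolPoly M β (x + t) * checkPoly N a (2 * t)) x)
      (𝓝[>] 0) (𝓝 (∑ i ∈ Finset.range (M + 1) ×ˢ Finset.range (N + 1),
        -(2 * π * Complex.I) * (a i.2 * β i.1 * Real.sign (((i.1 : ℤ) - 2 * i.2 : ℤ) : ℝ))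
          * Complex.exp ((2 * (i.1 : ℤ) - 2 * i.2 : ℤ) * Complex.I * x))) := by
  rw [funext (symbolPoly_mul_checkPoly M N β a x)]
  convert tendsto_truncatedHilbert_trigPoly (Finset.range (M + 1) ×ˢ Finset.range (N + 1))
    (fun i => β i.1 * a i.2 * Complex.exp (i.1 * Complex.I * x))
    (fun i => (i.1 : ℤ) - 2 * i.2) x using 2
  refine Finset.sum_congr rfl fun i _ => ?_
  rw [show ((2 * (i.1 : ℤ) - 2 * i.2 : ℤ) : ℂ) * Complex.I * x
      = i.1 * Complex.I * x + ((i.1 : ℤ) - 2 * i.2 : ℤ) * Complex.I * x by push_cast; ring,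
    Complex.exp_add]
  ring

theorem sum_product_ite_two_mul_sub_eq (M N K : ℕ) (f : ℕ → ℕ → ℂ) :
    ∑ i ∈ Finset.range (M + 1) ×ˢ Finset.range (N + 1),
        (if 2 * (i.1 : ℤ) - 2 * i.2 = K then f i.1 i.2 else 0)
      = if K % 2 = 0 then
          ∑ n ∈ Finset.range (N + 1), (if K / 2 + n ≤ M then f (K / 2 + n) n else 0)
        else 0 := by
  rw [Finset.sum_product_right]
  split_ifs with hK
  · refine Finset.sum_congr rfl fun n _ => ?_
    have hk : ∀ k : ℕ, 2 * (k : ℤ) - 2 * n = K ↔ K / 2 + n = k := fun k => by omega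
    simp only [hk, Finset.sum_ite_eq, Finset.mem_range, Nat.lt_succ_iff]
  · exact Finset.sum_eq_zero fun n _ => Finset.sum_eq_zero fun k _ => if_neg (by omega)

/-- **Fourier identity for the bilinear Hilbert transform.** There is a nonzero constant `c`
such that for all trigonometric polynomials `b(x) = Σ β_k e^{ikx}` and `F(x) = f(e^{-ix})`
with `f(z) = Σ a_n z^n`, if `G` is the principal value
`G(x) = p.v. ∫_𝕋 b(x+t) F(2t) / tan((x-t)/2) dt`, then the nonnegative Fourier coefficients of
`G` (i.e. its analytic projection) are `c · Σ_n a_n β_{m+n} sign(m-n)` at frequency `2m`, and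
vanish at odd nonnegative frequencies. -/
theorem analytic_projection_bilinear_hilbert : ∃ c : ℂ, c ≠ 0 ∧
    ∀ (M N : ℕ) (β a : ℕ → ℂ) (G : ℝ → ℂ),
      (∀ x : ℝ, Tendsto (fun ε : ℝ =>
          ∫ t in Set.Ioo (x - π) (x + π) \ Set.Ioo (x - ε) (x + ε),
            symbolPoly M β (x + t) * checkPoly N a (2 * t) /
              (Real.tan ((x - t) / 2) : ℂ))
        (nhdsWithin 0 (Set.Ioi 0)) (nhds (G x))) →
      ∀ k : ℕ,
        ((1 / (2 * π) : ℝ) : ℂ) *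
            ∫ x in (0:ℝ)..(2 * π), G x * Complex.exp (-(k * Complex.I * x)) =
          c * (if k % 2 = 0 then
              ∑ n ∈ Finset.range (N + 1),
                (if k / 2 + n ≤ M then
                  a n * β (k / 2 + n) * (Real.sign (((k / 2 : ℕ) : ℝ) - n) : ℂ)
                else 0)
            else 0) := by
  refine ⟨-(2 * π * Complex.I), by simp [pi_ne_zero, Complex.I_ne_zero], ?_⟩
  intro M N β a G hG K
  set s := Finset.range (M + 1) ×ˢ Finset.range (N + 1)
  set f : ℕ → ℕ → ℂ := fun k n => a n * β k * Real.sign (((k : ℤ) - 2 * n : ℤ) : ℝ)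
  have hGx : ∀ x, G x = ∑ i ∈ s, -(2 * π * Complex.I) * f i.1 i.2
      * Complex.exp ((2 * (i.1 : ℤ) - 2 * i.2 : ℤ) * Complex.I * x) := fun x =>
    tendsto_nhds_unique (hG x) (tendsto_truncatedHilbert_symbolPoly_mul_checkPoly M N β a x)
  calc ((1 / (2 * π) : ℝ) : ℂ) * ∫ x in (0:ℝ)..(2 * π), G x * Complex.exp (-(K * Complex.I * x))
      = ∑ i ∈ s, if 2 * (i.1 : ℤ) - 2 * i.2 = K then -(2 * π * Complex.I) * f i.1 i.2 else 0 := by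
        rw [show (K : ℂ) = ((K : ℤ) : ℂ) from (Int.cast_natCast K).symm]
        simp only [hGx]
        exact fourierCoeff_trigPoly s _ _ K
    _ = -(2 * π * Complex.I) * ∑ i ∈ s, if 2 * (i.1 : ℤ) - 2 * i.2 = K then f i.1 i.2 else 0 := by
        simp only [Finset.mul_sum, mul_ite, mul_zero]
    _ = _ := by
        rw [sum_product_ite_two_mul_sub_eq]
        refine congrArg _ (if_congr Iff.rfl (Finset.sum_congr rfl fun n _ =>
          if_congr Iff.rfl ?_ rfl) rfl)
        simp only [f]
        congr 3
        generalize K / 2 = q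
        push_cast
        ring
end
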